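/- For every t ≥ 0 and every finite sequence k₁,…,k_t ∈ {0,…,M−1}, there exist nonnegative real numbers λ₀,…,λ_M with Σ_{i=0}^{M} λ_i = 1 such that P_{k_t} P_{k_{t−1}} ⋯ P_{k_1} v₀ = Σ_{i=0}^{M} λ_i v_i; i.e., any product of the update matrices applied to the initial law v₀ (the point mass at 0) is a convex combination of the vectors v₀,…,v_M. -/

import Mathlib

open Matrix

/-- The vector `v_j ∈ ℝ^{M+1}`: the law of `min(j, G)` for `G ~ Geo(q)`. -/
noncomputable def sixV (q : ℝ) (M : ℕ) (j : Fin (M + 1)) : Fin (M + 1) → ℝ :=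
  fun k =>
    if (k : ℕ) < (j : ℕ) then (1 - q) * q ^ (k : ℕ)
    else if (k : ℕ) = (j : ℕ) then q ^ (j : ℕ)
    else 0

/-- The update matrix `P_k`, equal to the identity except in rows/columns `k, k+1`. -/
noncomputable def sixP (b₁ b₂ : ℝ) (M : ℕ) (k : Fin M) :
    Matrix (Fin (M + 1)) (Fin (M + 1)) ℝ :=
  fun i j =>
    if i = k.castSucc ∧ j = k.castSucc then 1 - b₁
    else if i = k.castSucc ∧ j = k.succ then b₂
    else if i = k.succ ∧ j = k.castSucc then b₁
    else if i = k.succ ∧ j = k.succ then 1 - b₂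
    else if i = j then 1 else 0

/-!
Each `P_k` maps every `v_i` into the convex hull of `v_0, …, v_M`. For `i ∉ {k, k+1}` the
coordinates `k, k+1` of `v_i` are either both zero or in ratio `q = b₁ / b₂`, which is exactly
the stationary ratio of the two-state chain `P_k` acts by, so `P_k v_i = v_i`; and `P_k` sends
`v_k` and `v_{k+1}` to points of the segment `[v_k, v_{k+1}]`. Being linear, `P_k` therefore
preserves that convex hull, which contains `v_0`.
-/

open Set

theorem exists_weights_of_mem_convexHull_range {ι E : Type*} [Fintype ι] [AddCommGroup E]
    [Module ℝ E] {v : ι → E} {x : E} (hx : x ∈ convexHull ℝ (range v)) :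
    ∃ w : ι → ℝ, (∀ i, 0 ≤ w i) ∧ ∑ i, w i = 1 ∧ x = ∑ i, w i • v i := by
  classical
  have hv : range v = Fintype.linearCombination ℝ v '' range fun i ↦ Pi.single i 1 := by
    simp [← range_comp, Function.comp_def]
  rw [hv, ← LinearMap.image_convexHull, convexHull_rangle_single_eq_stdSimplex] at hx
  obtain ⟨w, ⟨hw₀, hw₁⟩, rfl⟩ := hx
  exact ⟨w, hw₀, hw₁, Fintype.linearCombination_apply ℝ v w⟩

theorem LinearMap.mapsTo_convexHull {𝕜 E : Type*} [Semiring 𝕜] [PartialOrder 𝕜]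
    [AddCommMonoid E] [Module 𝕜 E] (f : E →ₗ[𝕜] E) {s : Set E}
    (h : MapsTo f s (convexHull 𝕜 s)) : MapsTo f (convexHull 𝕜 s) (convexHull 𝕜 s) :=
  convexHull_min h ((convex_convexHull 𝕜 s).linear_preimage f)

theorem Matrix.list_prod_mulVec_mem {n R : Type*} [Fintype n] [DecidableEq n] [Semiring R]
    {s : Set (n → R)} {l : List (Matrix n n R)} (hl : ∀ A ∈ l, MapsTo (A *ᵥ ·) s s)
    {x : n → R} (hx : x ∈ s) : l.prod *ᵥ x ∈ s := by
  induction l with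
  | nil => simpa using hx
  | cons A l ih =>
    rw [List.prod_cons, ← mulVec_mulVec]
    simp only [List.mem_cons, forall_eq_or_imp] at hl
    exact hl.1 (ih hl.2)

section

variable {b₁ b₂ q : ℝ} {M : ℕ} (k : Fin M)

theorem sixP_mulVec_castSucc (w : Fin (M + 1) → ℝ) :
    (sixP b₁ b₂ M k *ᵥ w) k.castSucc = (1 - b₁) * w k.castSucc + b₂ * w k.succ := by
  have hne : k.castSucc ≠ k.succ := Fin.castSucc_lt_succ.ne
  rw [mulVec, dotProduct, Fintype.sum_eq_add _ _ hne]
  · simp [sixP, hne.symm]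
  · rintro j ⟨h₁, h₂⟩
    simp [sixP, h₁, h₂, Ne.symm h₁]

theorem sixP_mulVec_succ (w : Fin (M + 1) → ℝ) :
    (sixP b₁ b₂ M k *ᵥ w) k.succ = b₁ * w k.castSucc + (1 - b₂) * w k.succ := by
  have hne : k.castSucc ≠ k.succ := Fin.castSucc_lt_succ.ne
  rw [mulVec, dotProduct, Fintype.sum_eq_add _ _ hne]
  · simp [sixP, hne.symm]
  · rintro j ⟨h₁, h₂⟩
    simp [sixP, h₁, h₂, Ne.symm h₂, hne.symm]

theorem sixP_mulVec_of_ne (w : Fin (M + 1) → ℝ) {i : Fin (M + 1)} (h₁ : i ≠ k.castSucc)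
    (h₂ : i ≠ k.succ) : (sixP b₁ b₂ M k *ᵥ w) i = w i := by
  rw [mulVec, dotProduct, Fintype.sum_eq_single i]
  · simp [sixP, h₁, h₂]
  · intro j hj
    simp [sixP, h₁, h₂, Ne.symm hj]

theorem sixV_apply_of_lt {j i : Fin (M + 1)} (h : j < i) :
    sixV q M i j = (1 - q) * q ^ (j : ℕ) :=
  if_pos h

theorem sixV_apply_self (i : Fin (M + 1)) : sixV q M i i = q ^ (i : ℕ) := by
  simp [sixV]

theorem sixV_apply_of_gt {j i : Fin (M + 1)} (h : i < j) : sixV q M i j = 0 := by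
  simp [sixV, Fin.lt_def.not.mpr h.not_gt, Fin.val_ne_of_ne h.ne']

theorem sixV_castSucc_apply_eq_succ_apply {j : Fin (M + 1)} (h₁ : j ≠ k.castSucc)
    (h₂ : j ≠ k.succ) : sixV q M k.castSucc j = sixV q M k.succ j := by
  rw [Ne, Fin.ext_iff] at h₁ h₂
  simp only [sixV, Fin.val_castSucc, Fin.val_succ] at h₁ h₂ ⊢
  split_ifs <;> first | rfl | omega

theorem sixP_mulVec_eq_self {w : Fin (M + 1) → ℝ} (h : b₂ * w k.succ = b₁ * w k.castSucc) :
    sixP b₁ b₂ M k *ᵥ w = w := by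
  funext j
  by_cases h₁ : j = k.castSucc
  · subst h₁; rw [sixP_mulVec_castSucc]; linarith
  by_cases h₂ : j = k.succ
  · subst h₂; rw [sixP_mulVec_succ]; linarith
  exact sixP_mulVec_of_ne k w h₁ h₂

variable (hq : q * b₂ = b₁)
include hq

theorem sixP_mulVec_sixV_of_ne {i : Fin (M + 1)} (h₁ : i ≠ k.castSucc) (h₂ : i ≠ k.succ) :
    sixP b₁ b₂ M k *ᵥ sixV q M i = sixV q M i := by
  apply sixP_mulVec_eq_self
  rcases lt_or_gt_of_ne h₁ with hlt | hgt
  · rw [sixV_apply_of_gt hlt, sixV_apply_of_gt (hlt.trans Fin.castSucc_lt_succ)]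
    ring
  · have hgt' : k.succ < i := (Fin.castSucc_lt_iff_succ_le.mp hgt).lt_of_ne' h₂
    rw [sixV_apply_of_lt hgt, sixV_apply_of_lt hgt', Fin.val_succ, Fin.val_castSucc]
    linear_combination (1 - q) * q ^ (k : ℕ) * hq

theorem sixP_mulVec_sixV_castSucc :
    sixP b₁ b₂ M k *ᵥ sixV q M k.castSucc =
      (1 - b₂) • sixV q M k.castSucc + b₂ • sixV q M k.succ := by
  subst hq
  have hlt : k.castSucc < k.succ := Fin.castSucc_lt_succ
  funext j
  simp only [Pi.add_apply, Pi.smul_apply, smul_eq_mul]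
  by_cases h₁ : j = k.castSucc
  · subst h₁
    rw [sixP_mulVec_castSucc, sixV_apply_self, sixV_apply_of_gt hlt, sixV_apply_of_lt hlt]
    simp only [Fin.val_castSucc]
    ring
  by_cases h₂ : j = k.succ
  · subst h₂
    rw [sixP_mulVec_succ, sixV_apply_self k.castSucc, sixV_apply_self k.succ,
      sixV_apply_of_gt hlt]
    simp only [Fin.val_succ, Fin.val_castSucc, pow_succ]
    ring
  rw [sixP_mulVec_of_ne k _ h₁ h₂, sixV_castSucc_apply_eq_succ_apply k h₁ h₂]
  ring

theorem sixP_mulVec_sixV_succ :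
    sixP b₁ b₂ M k *ᵥ sixV q M k.succ =
      b₁ • sixV q M k.castSucc + (1 - b₁) • sixV q M k.succ := by
  subst hq
  have hlt : k.castSucc < k.succ := Fin.castSucc_lt_succ
  funext j
  simp only [Pi.add_apply, Pi.smul_apply, smul_eq_mul]
  by_cases h₁ : j = k.castSucc
  · subst h₁
    rw [sixP_mulVec_castSucc, sixV_apply_self k.castSucc, sixV_apply_self k.succ,
      sixV_apply_of_lt hlt]
    simp only [Fin.val_succ, Fin.val_castSucc, pow_succ]
    ring
  by_cases h₂ : j = k.succ
  · subst h₂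
    rw [sixP_mulVec_succ, sixV_apply_self k.succ, sixV_apply_of_lt hlt,
      sixV_apply_of_gt hlt]
    simp only [Fin.val_succ, Fin.val_castSucc, pow_succ]
    ring
  rw [sixP_mulVec_of_ne k _ h₁ h₂, sixV_castSucc_apply_eq_succ_apply k h₁ h₂]
  ring

theorem sixP_mulVec_sixV_mem_convexHull (hb₁ : 0 ≤ b₁) (hb₁' : b₁ ≤ 1) (hb₂ : 0 ≤ b₂)
    (hb₂' : b₂ ≤ 1) (i : Fin (M + 1)) :
    sixP b₁ b₂ M k *ᵥ sixV q M i ∈ convexHull ℝ (range (sixV q M)) := by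
  have hseg : segment ℝ (sixV q M k.castSucc) (sixV q M k.succ) ⊆
      convexHull ℝ (range (sixV q M)) :=
    segment_subset_convexHull (mem_range_self _) (mem_range_self _)
  by_cases h₁ : i = k.castSucc
  · subst h₁
    rw [sixP_mulVec_sixV_castSucc k hq]
    exact hseg ⟨1 - b₂, b₂, by linarith, hb₂, by ring, rfl⟩
  by_cases h₂ : i = k.succ
  · subst h₂
    rw [sixP_mulVec_sixV_succ k hq]
    exact hseg ⟨b₁, 1 - b₁, hb₁, by linarith, by ring, rfl⟩
  rw [sixP_mulVec_sixV_of_ne k hq h₁ h₂]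
  exact subset_convexHull ℝ _ (mem_range_self i)

end

theorem stmt2_general (b₁ b₂ q : ℝ) (hb₁ : 0 < b₁) (hb₁₂ : b₁ < b₂) (hb₂ : b₂ < 1)
    (hq : q = b₁ / b₂) (M : ℕ) (ks : List (Fin M)) :
    ∃ lam : Fin (M + 1) → ℝ, (∀ i, 0 ≤ lam i) ∧ (∑ i, lam i = 1) ∧
      (ks.map (sixP b₁ b₂ M)).prod.mulVec (sixV q M 0) = ∑ i, lam i • sixV q M i := by
  have hq' : q * b₂ = b₁ := by rw [hq, div_mul_cancel₀ _ (by linarith)]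
  apply exists_weights_of_mem_convexHull_range
  refine Matrix.list_prod_mulVec_mem ?_ (subset_convexHull ℝ _ (mem_range_self 0))
  simp only [List.mem_map]
  rintro _ ⟨k, -, rfl⟩
  refine (sixP b₁ b₂ M k).mulVecLin.mapsTo_convexHull ?_
  rintro _ ⟨i, rfl⟩
  exact sixP_mulVec_sixV_mem_convexHull k hq' hb₁.le (by linarith) (by linarith) (by linarith) i

/-- Any product of update matrices applied to the point mass at `0` is a convex
combination of the vectors `v₀, …, v_M`. -/
theorem stmt2 (b₁ b₂ q : ℝ) (hb₁ : 0 < b₁) (hb₁₂ : b₁ < b₂) (hb₂ : b₂ < 1)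
    (hq : q = b₁ / b₂) (M : ℕ) (hM : 1 ≤ M) (ks : List (Fin M)) :
    ∃ lam : Fin (M + 1) → ℝ, (∀ i, 0 ≤ lam i) ∧ (∑ i, lam i = 1) ∧
      (ks.map (sixP b₁ b₂ M)).prod.mulVec (sixV q M 0) = ∑ i, lam i • sixV q M i :=
  stmt2_general b₁ b₂ q hb₁ hb₁₂ hb₂ hq M ks
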